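/- arXiv:0707.0027 — 2 statements merged into one kernel-verified Lean document; each statement's English description precedes it below -/
import Mathlib

section
/- First Transpositional Relation: Let q(s,t) : [−ε,ε] × [a,b] → ℝⁿ be a C² variation. Then for every (s,t) and every index j, (∂/∂t ∂q^i/∂s − ∂/∂s ∂q^i/∂t) Ψ^j_i(q) = (∂/∂t δθ^j − ∂/∂s u^j) + γ^j_{ab}(q) u^a δθ^b, where the repeated indices i, a, b are summed from 1 to n. -/
open Matrix Real

noncomputable section

/-- Partial derivative of `f : ℝⁿ → ℝ` at `x` in the `j`-th coordinate direction. -/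
def pder {n : ℕ} (f : (Fin n → ℝ) → ℝ) (x : Fin n → ℝ) (j : Fin n) : ℝ :=
  fderiv ℝ f x (Pi.single j 1)

/-- Hamel coefficients `γ^s_{pq}(x) = (∂Ψ^s_i/∂x^j − ∂Ψ^s_j/∂x^i) Φ^i_p Φ^j_q`
(summation over repeated indices `i`, `j`). -/
def hamel {n : ℕ} (Ψ Φ : (Fin n → ℝ) → Matrix (Fin n) (Fin n) ℝ)
    (x : Fin n → ℝ) (s p r : Fin n) : ℝ :=
  ∑ i, ∑ j, (pder (fun y => Ψ y s i) x j - pder (fun y => Ψ y s j) x i) * Φ x i p * Φ x j r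

/-- Quasi-velocities `u^j(s,t) = Ψ^j_i(q(s,t)) ∂q^i/∂t` of a variation `q`. -/
def qvel {n : ℕ} (Ψ : (Fin n → ℝ) → Matrix (Fin n) (Fin n) ℝ)
    (q : ℝ → ℝ → Fin n → ℝ) (s t : ℝ) : Fin n → ℝ :=
  fun j => ∑ i, Ψ (q s t) j i * deriv (fun t' => q s t' i) t

/-- Quasi-coordinate variations `δθ^j(s,t) = Ψ^j_i(q(s,t)) ∂q^i/∂s` of a variation `q`. -/
def qvar {n : ℕ} (Ψ : (Fin n → ℝ) → Matrix (Fin n) (Fin n) ℝ)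
    (q : ℝ → ℝ → Fin n → ℝ) (s t : ℝ) : Fin n → ℝ :=
  fun j => ∑ i, Ψ (q s t) j i * deriv (fun s' => q s' t i) s


lemma clm_apply_eq_sum {n : ℕ} (L : (Fin n → ℝ) →L[ℝ] ℝ) (v : Fin n → ℝ) :
    L v = ∑ k, v k * L (Pi.single k 1) := by
  have hv : v = ∑ k, v k • (Pi.single k (1:ℝ) : Fin n → ℝ) := by
    funext i; simp [Finset.sum_apply, Pi.single_apply]
  conv_lhs => rw [hv]
  rw [map_sum]; simp [smul_eq_mul]

lemma alg_key {n : ℕ} (A B : Matrix (Fin n) (Fin n) ℝ) (h : B * A = 1)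
    (X : Fin n → ℝ) (i : Fin n) : ∑ p, B i p * (∑ l, A p l * X l) = X i := by
  have : ∑ p, B i p * (∑ l, A p l * X l) = (B.mulVec (A.mulVec X)) i := by
    simp [Matrix.mulVec, dotProduct]
  rw [this, Matrix.mulVec_mulVec, h, Matrix.one_mulVec]

lemma alg {n : ℕ} (A B : Matrix (Fin n) (Fin n) ℝ) (h : B * A = 1)
    (ψd : Fin n → Fin n → ℝ) (V W M N : Fin n → ℝ) (j : Fin n) :
    ∑ i, (M i - N i) * A j i
    = (∑ i, ((∑ k, V k * ψd i k) * W i + A j i * M i)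
       - ∑ i, ((∑ k, W k * ψd i k) * V i + A j i * N i))
      + ∑ p, ∑ r, ((∑ i, ∑ k, (ψd i k - ψd k i) * B i p * B k r)
          * (∑ l, A p l * V l)) * (∑ l, A r l * W l) := by
  have step1 : ∀ r, ∑ p, ((∑ i, ∑ k, (ψd i k - ψd k i) * B i p * B k r)
      * (∑ l, A p l * V l)) = ∑ i, ∑ k, (ψd i k - ψd k i) * V i * B k r := by
    intro r
    calc ∑ p, ((∑ i, ∑ k, (ψd i k - ψd k i) * B i p * B k r) * (∑ l, A p l * V l))
        = ∑ p, ∑ i, ∑ k, (ψd i k - ψd k i) * B k r * (∑ l, A p l * V l) * B i p := by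
          simp only [Finset.sum_mul]
          exact Finset.sum_congr rfl fun p _ => Finset.sum_congr rfl fun i _ =>
            Finset.sum_congr rfl fun k _ => by ring
      _ = ∑ i, ∑ p, ∑ k, (ψd i k - ψd k i) * B k r * (∑ l, A p l * V l) * B i p :=
          Finset.sum_comm
      _ = ∑ i, ∑ k, ∑ p, (ψd i k - ψd k i) * B k r * (∑ l, A p l * V l) * B i p :=
          Finset.sum_congr rfl fun i _ => Finset.sum_comm
      _ = ∑ i, ∑ k, (ψd i k - ψd k i) * B k r * ∑ p, B i p * (∑ l, A p l * V l) := by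
          refine Finset.sum_congr rfl fun i _ => Finset.sum_congr rfl fun k _ => ?_
          rw [Finset.mul_sum]
          exact Finset.sum_congr rfl fun p _ => by ring
      _ = ∑ i, ∑ k, (ψd i k - ψd k i) * V i * B k r := by
          refine Finset.sum_congr rfl fun i _ => Finset.sum_congr rfl fun k _ => ?_
          rw [alg_key A B h V i]; ring
  have hH : ∑ p, ∑ r, ((∑ i, ∑ k, (ψd i k - ψd k i) * B i p * B k r)
      * (∑ l, A p l * V l)) * (∑ l, A r l * W l)
      = ∑ i, ∑ k, (ψd i k - ψd k i) * V i * W k := by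
    calc ∑ p, ∑ r, ((∑ i, ∑ k, (ψd i k - ψd k i) * B i p * B k r)
          * (∑ l, A p l * V l)) * (∑ l, A r l * W l)
        = ∑ r, ∑ p, ((∑ i, ∑ k, (ψd i k - ψd k i) * B i p * B k r)
          * (∑ l, A p l * V l)) * (∑ l, A r l * W l) := Finset.sum_comm
      _ = ∑ r, (∑ p, ((∑ i, ∑ k, (ψd i k - ψd k i) * B i p * B k r)
          * (∑ l, A p l * V l))) * (∑ l, A r l * W l) := by
          exact Finset.sum_congr rfl fun r _ => (Finset.sum_mul _ _ _).symm
      _ = ∑ r, (∑ i, ∑ k, (ψd i k - ψd k i) * V i * B k r) * (∑ l, A r l * W l) := by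
          exact Finset.sum_congr rfl fun r _ => by rw [step1 r]
      _ = ∑ r, ∑ i, ∑ k, (ψd i k - ψd k i) * V i * (∑ l, A r l * W l) * B k r := by
          refine Finset.sum_congr rfl fun r _ => ?_
          simp only [Finset.sum_mul]
          exact Finset.sum_congr rfl fun i _ => Finset.sum_congr rfl fun k _ => by ring
      _ = ∑ i, ∑ r, ∑ k, (ψd i k - ψd k i) * V i * (∑ l, A r l * W l) * B k r :=
          Finset.sum_comm
      _ = ∑ i, ∑ k, ∑ r, (ψd i k - ψd k i) * V i * (∑ l, A r l * W l) * B k r :=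
          Finset.sum_congr rfl fun i _ => Finset.sum_comm
      _ = ∑ i, ∑ k, (ψd i k - ψd k i) * V i * ∑ r, B k r * (∑ l, A r l * W l) := by
          refine Finset.sum_congr rfl fun i _ => Finset.sum_congr rfl fun k _ => ?_
          rw [Finset.mul_sum]
          exact Finset.sum_congr rfl fun r _ => by ring
      _ = ∑ i, ∑ k, (ψd i k - ψd k i) * V i * W k := by
          refine Finset.sum_congr rfl fun i _ => Finset.sum_congr rfl fun k _ => ?_
          rw [alg_key A B h W k]
  rw [hH]
  have e1 : ∑ i, ((∑ k, V k * ψd i k) * W i + A j i * M i)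
      = (∑ i, ∑ k, V k * ψd i k * W i) + ∑ i, A j i * M i := by
    rw [Finset.sum_add_distrib]
    congr 1
    exact Finset.sum_congr rfl fun i _ => Finset.sum_mul _ _ _
  have e2 : ∑ i, ((∑ k, W k * ψd i k) * V i + A j i * N i)
      = (∑ i, ∑ k, W k * ψd i k * V i) + ∑ i, A j i * N i := by
    rw [Finset.sum_add_distrib]
    congr 1
    exact Finset.sum_congr rfl fun i _ => Finset.sum_mul _ _ _
  have h1 : ∑ i, (M i - N i) * A j i = (∑ i, A j i * M i) - ∑ i, A j i * N i := by
    rw [← Finset.sum_sub_distrib]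
    exact Finset.sum_congr rfl fun i _ => by ring
  have hanti : (∑ i, ∑ k, V k * ψd i k * W i) - (∑ i, ∑ k, W k * ψd i k * V i)
      + ∑ i, ∑ k, (ψd i k - ψd k i) * V i * W k = 0 := by
    set f : Fin n → Fin n → ℝ := fun i k =>
      V k * ψd i k * W i - W k * ψd i k * V i + (ψd i k - ψd k i) * V i * W k with hf
    have hsum : (∑ i, ∑ k, V k * ψd i k * W i) - (∑ i, ∑ k, W k * ψd i k * V i)
        + ∑ i, ∑ k, (ψd i k - ψd k i) * V i * W k = ∑ i, ∑ k, f i k := by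
      rw [← Finset.sum_sub_distrib, ← Finset.sum_add_distrib]
      refine Finset.sum_congr rfl fun i _ => ?_
      rw [← Finset.sum_sub_distrib, ← Finset.sum_add_distrib]
    rw [hsum]
    have hswap : ∑ i, ∑ k, f i k = ∑ i, ∑ k, f k i := Finset.sum_comm
    have hzero : (∑ i, ∑ k, f i k) + (∑ i, ∑ k, f k i) = 0 := by
      rw [← Finset.sum_add_distrib]
      have : ∀ i : Fin n, ∑ k, f i k + ∑ k, f k i = 0 := by
        intro i
        rw [← Finset.sum_add_distrib]
        refine Finset.sum_eq_zero fun k _ => ?_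
        simp only [hf]; ring
      rw [Finset.sum_congr rfl fun i _ => this i, Finset.sum_const_zero]
    linarith [hswap, hzero]
  linarith [e1, e2, h1, hanti]

/-- **First Transpositional Relation.**
For a C² variation `q(s,t)` on `[−ε,ε] × [a,b]`, at every `(s,t)` and every index `j`:
`(d δq^i − δ dq^i) Ψ^j_i = (d δθ^j − δ u^j) + γ^j_{ab} u^a δθ^b`. -/
theorem first_transpositional_relation {n : ℕ}
    (Ψ Φ : (Fin n → ℝ) → Matrix (Fin n) (Fin n) ℝ)
    (hΨ : ∀ i j : Fin n, ContDiff ℝ (⊤ : ℕ∞) (fun x => Ψ x i j))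
    (hΦ : ∀ x, Ψ x * Φ x = 1 ∧ Φ x * Ψ x = 1)
    (ε a b : ℝ) (hε : 0 < ε) (hab : a < b)
    (q : ℝ → ℝ → Fin n → ℝ)
    (hq : ContDiff ℝ 2 (fun p : ℝ × ℝ => q p.1 p.2)) :
    ∀ s ∈ Set.Icc (-ε) ε, ∀ t ∈ Set.Icc a b, ∀ j : Fin n,
      (∑ i, (deriv (fun t' => deriv (fun s' => q s' t' i) s) t
          - deriv (fun s' => deriv (fun t' => q s' t' i) t) s) * Ψ (q s t) j i)
      = (deriv (fun t' => qvar Ψ q s t' j) t - deriv (fun s' => qvel Ψ q s' t j) s)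
        + ∑ p, ∑ r, hamel Ψ Φ (q s t) j p r * qvel Ψ q s t p * qvar Ψ q s t r := by
  intro s _ t _ j
  have hFi : ∀ i : Fin n, ContDiff ℝ 2 (fun p : ℝ × ℝ => q p.1 p.2 i) :=
    fun i => contDiff_pi.1 hq i
  set D1 : ℝ × ℝ → Fin n → ℝ :=
    fun p i => fderiv ℝ (fun p : ℝ × ℝ => q p.1 p.2 i) p (1, 0) with hD1
  set D2 : ℝ × ℝ → Fin n → ℝ :=
    fun p i => fderiv ℝ (fun p : ℝ × ℝ => q p.1 p.2 i) p (0, 1) with hD2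
  have hdiff : ∀ i : Fin n, Differentiable ℝ (fun p : ℝ × ℝ => q p.1 p.2 i) :=
    fun i => (hFi i).differentiable (by norm_num)
  have hcurve_t : ∀ (s' t' : ℝ) (i : Fin n),
      HasDerivAt (fun u => q s' u i) (D2 (s', t') i) t' := by
    intro s' t' i
    have hline : HasDerivAt (fun u : ℝ => ((s' : ℝ), u)) ((0:ℝ), (1:ℝ)) t' :=
      (hasDerivAt_const t' s').prodMk (hasDerivAt_id t')
    exact ((hdiff i (s', t')).hasFDerivAt).comp_hasDerivAt t' hline
  have hcurve_s : ∀ (s' t' : ℝ) (i : Fin n),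
      HasDerivAt (fun u => q u t' i) (D1 (s', t') i) s' := by
    intro s' t' i
    have hline : HasDerivAt (fun u : ℝ => (u, (t' : ℝ))) ((1:ℝ), (0:ℝ)) s' :=
      (hasDerivAt_id s').prodMk (hasDerivAt_const s' t')
    exact ((hdiff i (s', t')).hasFDerivAt).comp_hasDerivAt s' hline
  have hds : ∀ (s' t' : ℝ) (i : Fin n), deriv (fun u => q u t' i) s' = D1 (s', t') i :=
    fun s' t' i => (hcurve_s s' t' i).deriv
  have hdt : ∀ (s' t' : ℝ) (i : Fin n), deriv (fun u => q s' u i) t' = D2 (s', t') i :=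
    fun s' t' i => (hcurve_t s' t' i).deriv
  have hD1c : ∀ i : Fin n, ContDiff ℝ 1 (fun p : ℝ × ℝ => D1 p i) := fun i =>
    ((hFi i).fderiv_right (by norm_num)).clm_apply contDiff_const
  have hD2c : ∀ i : Fin n, ContDiff ℝ 1 (fun p : ℝ × ℝ => D2 p i) := fun i =>
    ((hFi i).fderiv_right (by norm_num)).clm_apply contDiff_const
  have hM : ∀ i, HasDerivAt (fun t' => D1 (s, t') i)
      (deriv (fun t' => D1 (s, t') i) t) t := by
    intro i
    have : DifferentiableAt ℝ (fun t' => D1 (s, t') i) t :=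
      ((hD1c i).differentiable one_ne_zero (s, t)).comp t
        (((differentiable_const s).prodMk differentiable_id) t)
    exact this.hasDerivAt
  have hN : ∀ i, HasDerivAt (fun s' => D2 (s', t) i)
      (deriv (fun s' => D2 (s', t) i) s) s := by
    intro i
    have : DifferentiableAt ℝ (fun s' => D2 (s', t) i) s :=
      DifferentiableAt.comp (g := fun p : ℝ × ℝ => D2 p i) s ((hD2c i).differentiable one_ne_zero (s, t))
        ((differentiable_fun_id.prodMk (differentiable_const t) : Differentiable ℝ (fun s' : ℝ => (s', t))) s)
    exact this.hasDerivAt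
  have hgt : HasDerivAt (fun t' => q s t') (fun i => D2 (s, t) i) t :=
    hasDerivAt_pi.2 fun i => hcurve_t s t i
  have hgs : HasDerivAt (fun s' => q s' t) (fun i => D1 (s, t) i) s :=
    hasDerivAt_pi.2 fun i => hcurve_s s t i
  have hψt : ∀ i : Fin n, HasDerivAt (fun t' => Ψ (q s t') j i)
      (∑ k, D2 (s, t) k * pder (fun y => Ψ y j i) (q s t) k) t := by
    intro i
    have h1 := (((hΨ j i).differentiable (by simp) (q s t)).hasFDerivAt).comp_hasDerivAt t hgt
    have h2 : fderiv ℝ (fun y => Ψ y j i) (q s t) (fun k => D2 (s, t) k)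
        = ∑ k, D2 (s, t) k * pder (fun y => Ψ y j i) (q s t) k :=
      clm_apply_eq_sum _ _
    rwa [h2] at h1
  have hψs : ∀ i : Fin n, HasDerivAt (fun s' => Ψ (q s' t) j i)
      (∑ k, D1 (s, t) k * pder (fun y => Ψ y j i) (q s t) k) s := by
    intro i
    have h1 := (((hΨ j i).differentiable (by simp) (q s t)).hasFDerivAt).comp_hasDerivAt s hgs
    have h2 : fderiv ℝ (fun y => Ψ y j i) (q s t) (fun k => D1 (s, t) k)
        = ∑ k, D1 (s, t) k * pder (fun y => Ψ y j i) (q s t) k :=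
      clm_apply_eq_sum _ _
    rwa [h2] at h1
  have hqvar : deriv (fun t' => qvar Ψ q s t' j) t
      = ∑ i, ((∑ k, D2 (s, t) k * pder (fun y => Ψ y j i) (q s t) k) * D1 (s, t) i
          + Ψ (q s t) j i * deriv (fun t' => D1 (s, t') i) t) := by
    have hfe : (fun t' => qvar Ψ q s t' j)
        = fun t' => ∑ i, Ψ (q s t') j i * D1 (s, t') i := by
      funext t'; simp only [qvar, hds]
    rw [hfe]
    exact (HasDerivAt.fun_sum fun i _ => (hψt i).mul (hM i)).deriv
  have hqvel : deriv (fun s' => qvel Ψ q s' t j) s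
      = ∑ i, ((∑ k, D1 (s, t) k * pder (fun y => Ψ y j i) (q s t) k) * D2 (s, t) i
          + Ψ (q s t) j i * deriv (fun s' => D2 (s', t) i) s) := by
    have hfe : (fun s' => qvel Ψ q s' t j)
        = fun s' => ∑ i, Ψ (q s' t) j i * D2 (s', t) i := by
      funext s'; simp only [qvel, hdt]
    rw [hfe]
    exact (HasDerivAt.fun_sum fun i _ => (hψs i).mul (hN i)).deriv
  rw [hqvar, hqvel]
  simp only [qvel, qvar, hamel, hds, hdt]
  exact alg (Ψ (q s t)) (Φ (q s t)) (hΦ (q s t)).2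
    (fun i k => pder (fun y => Ψ y j i) (q s t) k)
    (fun k => D2 (s, t) k) (fun i => D1 (s, t) i)
    (fun i => deriv (fun t' => D1 (s, t') i) t)
    (fun i => deriv (fun s' => D2 (s', t) i) s) j

end
end

section
/- First variation formula in quasi-velocities: Let L : ℝⁿ × ℝⁿ → ℝ be C², define ℒ(q,u) = L(q, Φ(q)u), and let q(s,t) : [−ε,ε] × [a,b] → ℝⁿ be a proper C² variation. Define I(s) = ∫_a^b L(q(s,t), ∂q/∂t(s,t)) dt. Then I'(0) = ∫_a^b [ (∂ℒ/∂q^j) Φ^j_i − d/dt (∂ℒ/∂u^i) + (∂ℒ/∂u^j) γ^j_{ki} u^k ] δθ^i dt, where all quantities in the integrand are evaluated along the base curve s = 0, and repeated indices i, j, k are summed from 1 to n. -/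
open Matrix Real MeasureTheory intervalIntegral

noncomputable section

/-- The Lagrangian expressed in quasi-velocities: `ℒ(x,u) = L(x, Φ(x)u)`. -/
def scriptL {n : ℕ} (L : (Fin n → ℝ) → (Fin n → ℝ) → ℝ)
    (Φ : (Fin n → ℝ) → Matrix (Fin n) (Fin n) ℝ)
    (x u : Fin n → ℝ) : ℝ :=
  L x (Φ x *ᵥ u)

section aux
variable {n : ℕ}

lemma contDiff_det {E : Type*} [NormedAddCommGroup E] [NormedSpace ℝ E]
    (M : E → Matrix (Fin n) (Fin n) ℝ) (h : ∀ i j, ContDiff ℝ (⊤ : ℕ∞) (fun x => M x i j)) :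
    ContDiff ℝ (⊤ : ℕ∞) (fun x => (M x).det) := by
  simp only [Matrix.det_apply]
  apply ContDiff.sum
  intro σ _
  have : ContDiff ℝ (⊤ : ℕ∞) (fun x => ∏ i, M x (σ i) i) :=
    contDiff_prod (fun i _ => h (σ i) i)
  have heq : (fun x => Equiv.Perm.sign σ • ∏ i, M x (σ i) i)
      = fun x => ((Equiv.Perm.sign σ : ℤ) : ℝ) * ∏ i, M x (σ i) i := by
    funext x
    simp [Units.smul_def, zsmul_eq_mul]
  rw [heq]
  exact contDiff_const.mul this

lemma contDiff_Phi (Ψ Φ : (Fin n → ℝ) → Matrix (Fin n) (Fin n) ℝ)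
    (hΨ : ∀ i j : Fin n, ContDiff ℝ (⊤ : ℕ∞) (fun x => Ψ x i j))
    (hΦ : ∀ x, Ψ x * Φ x = 1 ∧ Φ x * Ψ x = 1) (i j : Fin n) :
    ContDiff ℝ (⊤ : ℕ∞) (fun x => Φ x i j) := by
  have hinv : ∀ x, Φ x = (Ψ x)⁻¹ := fun x => (Matrix.inv_eq_right_inv (hΦ x).1).symm
  have hdet : ContDiff ℝ (⊤ : ℕ∞) (fun x => (Ψ x).det) := contDiff_det Ψ hΨ
  have hdet0 : ∀ x, (Ψ x).det ≠ 0 := fun x =>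
    (Matrix.isUnit_det_of_right_inverse (hΦ x).1).ne_zero
  have hadj : ContDiff ℝ (⊤ : ℕ∞) (fun x => (Ψ x).adjugate i j) := by
    simp only [Matrix.adjugate_apply]
    apply contDiff_det
    intro k l
    by_cases hk : k = j
    · subst hk; simp only [Matrix.updateRow_self]; exact contDiff_const
    · simp only [Matrix.updateRow_apply, hk, if_false]; exact hΨ k l
  have : ContDiff ℝ (⊤ : ℕ∞) (fun x => ((Ψ x).det)⁻¹ * (Ψ x).adjugate i j) := by
    exact (hdet.inv hdet0).mul hadj
  convert this using 1
  funext x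
  rw [hinv x, Matrix.inv_def, Matrix.smul_apply, Ring.inverse_eq_inv', smul_eq_mul]

lemma mulPsiPhi {Ψ Φ : (Fin n → ℝ) → Matrix (Fin n) (Fin n) ℝ}
    (hΦ : ∀ x, Ψ x * Φ x = 1 ∧ Φ x * Ψ x = 1) (x : Fin n → ℝ) (i k : Fin n) :
    ∑ j, Ψ x i j * Φ x j k = if i = k then 1 else 0 := by
  have := congrArg (fun M => M i k) (hΦ x).1
  simpa [Matrix.mul_apply, Matrix.one_apply] using this

lemma mulPhiPsi {Ψ Φ : (Fin n → ℝ) → Matrix (Fin n) (Fin n) ℝ}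
    (hΦ : ∀ x, Ψ x * Φ x = 1 ∧ Φ x * Ψ x = 1) (x : Fin n → ℝ) (i k : Fin n) :
    ∑ j, Φ x i j * Ψ x j k = if i = k then 1 else 0 := by
  have := congrArg (fun M => M i k) (hΦ x).2
  simpa [Matrix.mul_apply, Matrix.one_apply] using this

lemma pder_PhiPsi {Ψ Φ : (Fin n → ℝ) → Matrix (Fin n) (Fin n) ℝ}
    (hΨ : ∀ i j : Fin n, ContDiff ℝ (⊤ : ℕ∞) (fun x => Ψ x i j))
    (hΦ : ∀ x, Ψ x * Φ x = 1 ∧ Φ x * Ψ x = 1)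
    (x : Fin n → ℝ) (m q r : Fin n) :
    ∑ j, (pder (fun y => Φ y m j) x r * Ψ x j q
        + Φ x m j * pder (fun y => Ψ y j q) x r) = 0 := by
  have hΦs := contDiff_Phi Ψ Φ hΨ hΦ
  have hD : ∀ j : Fin n, HasFDerivAt (fun y => Φ y m j * Ψ y j q)
      (Φ x m j • fderiv ℝ (fun y => Ψ y j q) x + Ψ x j q • fderiv ℝ (fun y => Φ y m j) x) x :=
    fun j => (((hΦs m j).differentiable (by simp) x).hasFDerivAt).mul
      (((hΨ j q).differentiable (by simp) x).hasFDerivAt)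
  have hsum : HasFDerivAt (fun y => ∑ j, Φ y m j * Ψ y j q)
      (∑ j, (Φ x m j • fderiv ℝ (fun y => Ψ y j q) x + Ψ x j q • fderiv ℝ (fun y => Φ y m j) x))
      x := HasFDerivAt.fun_sum (fun j _ => hD j)
  have hconst : (fun y => ∑ j, Φ y m j * Ψ y j q) = fun _ => (if m = q then (1:ℝ) else 0) := by
    funext y
    exact mulPhiPsi hΦ y m q
  have h0 : HasFDerivAt (fun y => ∑ j, Φ y m j * Ψ y j q) (0 : (Fin n → ℝ) →L[ℝ] ℝ) x := by
    rw [hconst]; exact hasFDerivAt_const _ _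
  have := hsum.unique h0
  have happ := congrArg (fun T => T (Pi.single r 1)) this
  simp only [ContinuousLinearMap.sum_apply, ContinuousLinearMap.add_apply,
    ContinuousLinearMap.smul_apply, ContinuousLinearMap.zero_apply, smul_eq_mul] at happ
  rw [← happ]
  apply Finset.sum_congr rfl
  intro j _
  simp [pder]
  ring
end aux

section expand
variable {n : ℕ}

lemma vec_expand (T : (Fin n → ℝ) →L[ℝ] ℝ) (w : Fin n → ℝ) :
    T w = ∑ r, w r * T (Pi.single r 1) := by
  have hw : w = ∑ r, w r • (Pi.single r 1 : Fin n → ℝ) := by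
    funext i
    simp [Finset.sum_apply, Pi.single_apply]
  conv_lhs => rw [hw]
  rw [map_sum]
  simp [smul_eq_mul]

lemma clm_expand (T : ((Fin n → ℝ) × (Fin n → ℝ)) →L[ℝ] ℝ) (w : (Fin n → ℝ) × (Fin n → ℝ)) :
    T w = (∑ p, w.1 p * T (Pi.single p 1, 0)) + ∑ m, w.2 m * T (0, Pi.single m 1) := by
  have hw : w = (∑ p, w.1 p • ((Pi.single p 1 : Fin n → ℝ), (0 : Fin n → ℝ)))
      + ∑ m, w.2 m • ((0 : Fin n → ℝ), (Pi.single m 1 : Fin n → ℝ)) := by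
    apply Prod.ext
    · simp [Prod.fst_sum, Prod.snd_sum]
      funext i
      simp [Finset.sum_apply, Pi.single_apply]
    · simp [Prod.fst_sum, Prod.snd_sum]
      funext i
      simp [Finset.sum_apply, Pi.single_apply]
  conv_lhs => rw [hw]
  rw [map_add, map_sum, map_sum]
  congr 1 <;> apply Finset.sum_congr rfl <;> intro p _ <;> rw [_root_.map_smul, smul_eq_mul]

end expand

section analysis
variable {n : ℕ} {E : Type*} [NormedAddCommGroup E] [NormedSpace ℝ E]

lemma hasDerivAt_slice_t (f : ℝ × ℝ → E) (hf : Differentiable ℝ f) (s t : ℝ) :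
    HasDerivAt (fun t' => f (s, t')) (fderiv ℝ f (s, t) (0, 1)) t := by
  have inner : HasDerivAt (fun t' : ℝ => ((s, t') : ℝ × ℝ)) ((0 : ℝ), (1 : ℝ)) t :=
    (hasDerivAt_const t s).prodMk (hasDerivAt_id t)
  exact (hf (s, t)).hasFDerivAt.comp_hasDerivAt t inner

lemma hasDerivAt_slice_s (f : ℝ × ℝ → E) (hf : Differentiable ℝ f) (s t : ℝ) :
    HasDerivAt (fun s' => f (s', t)) (fderiv ℝ f (s, t) (1, 0)) s := by
  have inner : HasDerivAt (fun s' : ℝ => ((s', t) : ℝ × ℝ)) ((1 : ℝ), (0 : ℝ)) s :=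
    (hasDerivAt_id s).prodMk (hasDerivAt_const s t)
  exact (hf (s, t)).hasFDerivAt.comp_hasDerivAt s inner

lemma deriv_qt {q : ℝ → ℝ → Fin n → ℝ}
    (hq : ContDiff ℝ 2 (fun p : ℝ × ℝ => q p.1 p.2)) (s t : ℝ) (i : Fin n) :
    deriv (fun t' => q s t' i) t
      = fderiv ℝ (fun p : ℝ × ℝ => q p.1 p.2) (s, t) (0, 1) i :=
  ((hasDerivAt_pi.1 (hasDerivAt_slice_t _ (hq.differentiable two_ne_zero) s t)) i).deriv

lemma deriv_qs {q : ℝ → ℝ → Fin n → ℝ}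
    (hq : ContDiff ℝ 2 (fun p : ℝ × ℝ => q p.1 p.2)) (s t : ℝ) (i : Fin n) :
    deriv (fun s' => q s' t i) s
      = fderiv ℝ (fun p : ℝ × ℝ => q p.1 p.2) (s, t) (1, 0) i :=
  ((hasDerivAt_pi.1 (hasDerivAt_slice_s _ (hq.differentiable two_ne_zero) s t)) i).deriv

lemma contDiff_Dv {q : ℝ → ℝ → Fin n → ℝ}
    (hq : ContDiff ℝ 2 (fun p : ℝ × ℝ => q p.1 p.2)) (v : ℝ × ℝ) :
    ContDiff ℝ 1 (fun p => fderiv ℝ (fun p : ℝ × ℝ => q p.1 p.2) p v) :=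
  (hq.fderiv_right (m := 1) (by norm_num)).clm_apply contDiff_const

end analysis

section step12
variable {n : ℕ}

lemma step12
    (L : (Fin n → ℝ) → (Fin n → ℝ) → ℝ)
    (hL : ContDiff ℝ 2 (fun p : (Fin n → ℝ) × (Fin n → ℝ) => L p.1 p.2))
    (a b : ℝ) (hab : a < b)
    (q : ℝ → ℝ → Fin n → ℝ)
    (hq : ContDiff ℝ 2 (fun p : ℝ × ℝ => q p.1 p.2))
    (hproper : ∀ s, q s a = q 0 a ∧ q s b = q 0 b) :
    deriv (fun s => ∫ t in a..b, L (q s t) (fun i => deriv (fun t' => q s t' i) t)) 0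
    = ∫ t in a..b, ∑ p : Fin n,
        (fderiv ℝ (fun pp : (Fin n → ℝ) × (Fin n → ℝ) => L pp.1 pp.2)
            (q 0 t, fun i => deriv (fun t' => q 0 t' i) t) ((Pi.single p 1 : Fin n → ℝ), 0)
          - deriv (fun t' => fderiv ℝ (fun pp : (Fin n → ℝ) × (Fin n → ℝ) => L pp.1 pp.2)
              (q 0 t', fun i => deriv (fun t'' => q 0 t'' i) t')
              (0, (Pi.single p 1 : Fin n → ℝ))) t)
        * deriv (fun s' => q s' t p) 0 := by
  have hq1 : ContDiff ℝ 1 (fun p : ℝ × ℝ => q p.1 p.2) := hq.of_le one_le_two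
  have hL1 : ContDiff ℝ 1 (fun pp : (Fin n → ℝ) × (Fin n → ℝ) => L pp.1 pp.2) :=
    hL.of_le one_le_two
  set Qf : ℝ × ℝ → (Fin n → ℝ) := fun p => q p.1 p.2 with hQfdef
  set Lc : (Fin n → ℝ) × (Fin n → ℝ) → ℝ := fun pp => L pp.1 pp.2 with hLcdef
  set Dt : ℝ × ℝ → (Fin n → ℝ) := fun p => fderiv ℝ Qf p (0, 1) with hDtdef
  set Ds : ℝ × ℝ → (Fin n → ℝ) := fun p => fderiv ℝ Qf p (1, 0) with hDsdef
  have hDt : ContDiff ℝ 1 Dt := contDiff_Dv hq (0, 1)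
  have hDs : ContDiff ℝ 1 Ds := contDiff_Dv hq (1, 0)
  set F2 : ℝ × ℝ → ℝ := fun p => Lc (Qf p, Dt p) with hF2def
  have hF2 : ContDiff ℝ 1 F2 := hL1.comp (hq1.prodMk hDt)
  have hF2c : Continuous F2 := hF2.continuous
  set F' : ℝ → ℝ → ℝ := fun x t => fderiv ℝ F2 (x, t) (1, 0) with hF'def
  have hF'c : Continuous (fun p : ℝ × ℝ => fderiv ℝ F2 p (1, 0)) :=
    (ContinuousLinearMap.apply ℝ ℝ ((1:ℝ), (0:ℝ))).continuous.comp
      (hF2.continuous_fderiv one_ne_zero)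
  have hF'deriv : ∀ (x t : ℝ), HasDerivAt (fun x' => F2 (x', t)) (F' x t) x := fun x t =>
    hasDerivAt_slice_s F2 (hF2.differentiable one_ne_zero) x t
  -- differentiation under the integral sign
  have hstep1 : deriv (fun s => ∫ t in a..b,
      L (q s t) (fun i => deriv (fun t' => q s t' i) t)) 0 = ∫ t in a..b, F' 0 t := by
    obtain ⟨C, hC⟩ := (IsCompact.prod isCompact_Icc isCompact_Icc :
        IsCompact ((Set.Icc (-1:ℝ) 1) ×ˢ (Set.Icc a b))).exists_bound_of_continuousOn
        hF'c.continuousOn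
    have hIab : Set.uIoc a b ⊆ Set.Icc a b := by
      rw [Set.uIoc_of_le hab.le]; exact Set.Ioc_subset_Icc_self
    have main := intervalIntegral.hasDerivAt_integral_of_dominated_loc_of_deriv_le
      (𝕜 := ℝ) (μ := volume) (F := fun x t => F2 (x, t)) (F' := F') (x₀ := (0:ℝ))
      (s := Metric.ball 0 1) (bound := fun _ => C) (a := a) (b := b) (Metric.ball_mem_nhds 0 one_pos)
      (Filter.Eventually.of_forall fun x =>
        (hF2c.comp (Continuous.prodMk_right x)).aestronglyMeasurable)
      ((hF2c.comp (Continuous.prodMk_right 0)).intervalIntegrable a b)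
      ((hF'c.comp (Continuous.prodMk_right 0)).aestronglyMeasurable)
      (Filter.Eventually.of_forall fun t ht x hx => by
        have hx1 : x ∈ Set.Icc (-1:ℝ) 1 := by
          have := Metric.mem_ball.1 hx
          rw [Real.dist_eq, sub_zero] at this
          constructor <;> [linarith [abs_le.1 this.le |>.1]; linarith [abs_le.1 this.le |>.2]]
        exact hC (x, t) (Set.mk_mem_prod hx1 (hIab ht)))
      (intervalIntegrable_const)
      (Filter.Eventually.of_forall fun t ht x hx => hF'deriv x t)
    have hgoalfun : (fun s => ∫ t in a..b,
        L (q s t) (fun i => deriv (fun t' => q s t' i) t)) = fun s => ∫ t in a..b, F2 (s, t) := by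
      funext s
      apply intervalIntegral.integral_congr
      intro t _
      have hv : (fun i => deriv (fun t' => q s t' i) t) = Dt (s, t) :=
        funext fun i => deriv_qt hq s t i
      show L (q s t) (fun i => deriv (fun t' => q s t' i) t) = F2 (s, t)
      rw [hv]
    rw [hgoalfun]
    exact main.2.deriv
  rw [hstep1]
  -- second derivative, symmetry
  have hA : ContDiff ℝ 1 (fderiv ℝ Qf) := hq.fderiv_right (by norm_num)
  set W : ℝ → Fin n → ℝ := fun t => fderiv ℝ (fderiv ℝ Qf) (0, t) (0, 1) (1, 0) with hWdef
  have hW : ∀ t, HasDerivAt (fun t' => Ds (0, t')) (W t) t := by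
    intro t
    have h1 : HasDerivAt (fun t' => fderiv ℝ Qf (0, t'))
        (fderiv ℝ (fderiv ℝ Qf) (0, t) (0, 1)) t :=
      hasDerivAt_slice_t _ (hA.differentiable one_ne_zero) 0 t
    have h2 := h1.clm_apply (hasDerivAt_const t ((1:ℝ), (0:ℝ)))
    simpa using h2
  set c : ℝ → (Fin n → ℝ) × (Fin n → ℝ) := fun t => (Qf (0, t), Dt (0, t)) with hcdef
  have hsymm : ∀ t, fderiv ℝ (fderiv ℝ Qf) (0, t) (1, 0) (0, 1)
      = fderiv ℝ (fderiv ℝ Qf) (0, t) (0, 1) (1, 0) := fun t =>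
    second_derivative_symmetric (f := Qf) (f' := fderiv ℝ Qf)
      (fun y => ((hq1.differentiable one_ne_zero) y).hasFDerivAt)
      ((hA.differentiable one_ne_zero) (0, t)).hasFDerivAt _ _
  have hF'eq : ∀ t, F' 0 t = fderiv ℝ Lc (c t) (Ds (0, t), W t) := by
    intro t
    have hq_part : HasDerivAt (fun s' => Qf (s', t)) (Ds (0, t)) 0 :=
      hasDerivAt_slice_s Qf (hq1.differentiable one_ne_zero) 0 t
    have h2 : HasDerivAt (fun s' => fderiv ℝ Qf (s', t))
        (fderiv ℝ (fderiv ℝ Qf) (0, t) (1, 0)) 0 :=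
      hasDerivAt_slice_s _ (hA.differentiable one_ne_zero) 0 t
    have hDt_part : HasDerivAt (fun s' => Dt (s', t)) (W t) 0 := by
      have h3 := h2.clm_apply (hasDerivAt_const (0:ℝ) ((0:ℝ), (1:ℝ)))
      rw [hWdef]
      simp only [map_zero, add_zero] at h3 ⊢
      rw [← hsymm t]
      simpa using h3
    have hpair : HasDerivAt (fun s' => ((Qf (s', t), Dt (s', t)) :
        (Fin n → ℝ) × (Fin n → ℝ))) (Ds (0, t), W t) 0 := hq_part.prodMk hDt_part
    have hcomp : HasDerivAt (fun s' => F2 (s', t))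
        (fderiv ℝ Lc (c t) (Ds (0, t), W t)) 0 := by
      have := ((hL1.differentiable one_ne_zero) (c t)).hasFDerivAt.comp_hasDerivAt 0 hpair
      exact this
    exact (hF'deriv 0 t).unique hcomp
  -- continuity facts
  set P : Fin n → ℝ → ℝ := fun p t => fderiv ℝ Lc (c t) ((Pi.single p 1 : Fin n → ℝ), 0)
    with hPdef
  set G : Fin n → ℝ → ℝ := fun m t => fderiv ℝ Lc (c t) (0, (Pi.single m 1 : Fin n → ℝ))
    with hGdef
  set dl : Fin n → ℝ → ℝ := fun p t => Ds (0, t) p with hdldef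
  have hins : ContDiff ℝ 1 (fun t : ℝ => (((0:ℝ), t) : ℝ × ℝ)) := contDiff_const.prodMk contDiff_id
  have hc1 : ContDiff ℝ 1 c := (hq1.comp hins).prodMk (hDt.comp hins)
  have hDL : ContDiff ℝ 1 (fun t => fderiv ℝ Lc (c t)) :=
    (hL.fderiv_right (by norm_num)).comp hc1
  have hPc : ∀ p, Continuous (P p) := fun p => (hDL.clm_apply contDiff_const).continuous
  have hGsm : ∀ m, ContDiff ℝ 1 (G m) := fun m => hDL.clm_apply contDiff_const
  have hdlc : ∀ p, Continuous (dl p) := fun p =>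
    (continuous_apply p).comp ((hDs.comp hins).continuous)
  have hWc : Continuous W := by
    have h1 : Continuous (fderiv ℝ (fderiv ℝ Qf)) := hA.continuous_fderiv one_ne_zero
    have h2 := (ContinuousLinearMap.apply ℝ ((ℝ × ℝ) →L[ℝ] (Fin n → ℝ))
      (((0:ℝ), (1:ℝ)) : ℝ × ℝ)).continuous.comp h1
    have h3 := (ContinuousLinearMap.apply ℝ (Fin n → ℝ)
      (((1:ℝ), (0:ℝ)) : ℝ × ℝ)).continuous.comp h2
    exact h3.comp (continuous_const.prodMk continuous_id)
  have hWmc : ∀ m, Continuous (fun t => W t m) := fun m => (continuous_apply m).comp hWc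
  -- pointwise expansion of the integrand
  have hexp : ∀ t, F' 0 t = (∑ p, dl p t * P p t) + ∑ m, W t m * G m t := by
    intro t
    rw [hF'eq t, clm_expand]
  -- split the integral
  have hPint : ∀ p, IntervalIntegrable (fun t => dl p t * P p t) volume a b := fun p =>
    ((hdlc p).mul (hPc p)).intervalIntegrable a b
  have hWint : ∀ m, IntervalIntegrable (fun t => W t m * G m t) volume a b := fun m =>
    ((hWmc m).mul (hGsm m).continuous).intervalIntegrable a b
  have hsplit : ∫ t in a..b, F' 0 t
      = (∑ p, ∫ t in a..b, dl p t * P p t) + ∑ m, ∫ t in a..b, W t m * G m t := by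
    have h1 : ∫ t in a..b, F' 0 t
        = ∫ t in a..b, ((∑ p, dl p t * P p t) + ∑ m, W t m * G m t) :=
      intervalIntegral.integral_congr (fun t _ => hexp t)
    rw [h1, intervalIntegral.integral_add
        ((continuous_finset_sum (f := fun p t => dl p t * P p t) _ fun p _ => (hdlc p).mul (hPc p)).intervalIntegrable a b)
        ((continuous_finset_sum (f := fun m t => W t m * G m t) _ fun m _ => (hWmc m).mul (hGsm m).continuous).intervalIntegrable a b),
      intervalIntegral.integral_finset_sum (fun p _ => hPint p),
      intervalIntegral.integral_finset_sum (fun m _ => hWint m)]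
  -- integration by parts for each m
  have hGderiv : ∀ m t, HasDerivAt (G m) (deriv (G m) t) t := fun m t =>
    (((hGsm m).differentiable one_ne_zero) t).hasDerivAt
  have hG'c : ∀ m, Continuous (deriv (G m)) := fun m => (hGsm m).continuous_deriv le_rfl
  have hdl0 : ∀ m, dl m a = 0 ∧ dl m b = 0 := by
    intro m
    constructor
    · show Ds (0, a) m = 0
      show fderiv ℝ Qf (0, a) (1, 0) m = 0
      rw [← deriv_qs hq 0 a m]
      have hcst : (fun s' => q s' a m) = fun _ => q 0 a m :=
        funext fun s' => by rw [(hproper s').1]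
      rw [hcst, deriv_const]
    · show Ds (0, b) m = 0
      show fderiv ℝ Qf (0, b) (1, 0) m = 0
      rw [← deriv_qs hq 0 b m]
      have hcst : (fun s' => q s' b m) = fun _ => q 0 b m :=
        funext fun s' => by rw [(hproper s').2]
      rw [hcst, deriv_const]
  have hibp : ∀ m, ∫ t in a..b, W t m * G m t = - ∫ t in a..b, dl m t * deriv (G m) t := by
    intro m
    have hu : ∀ t ∈ Set.uIcc a b, HasDerivAt (fun t' => dl m t') (W t m) t := fun t _ =>
      (hasDerivAt_pi.1 (hW t)) m
    have h := intervalIntegral.integral_deriv_mul_eq_sub (u := fun t => dl m t) (v := G m)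
      (u' := fun t => W t m) (v' := deriv (G m)) hu (fun t _ => hGderiv m t)
      ((hWmc m).intervalIntegrable a b) ((hG'c m).intervalIntegrable a b)
    simp only [(hdl0 m).1, (hdl0 m).2, zero_mul, sub_zero] at h
    have hadd := intervalIntegral.integral_add (g := fun t => dl m t * deriv (G m) t) (hWint m)
      (((hdlc m).mul (hG'c m)).intervalIntegrable a b)
    rw [hadd] at h
    linarith
  -- reassemble; identify with the stated right-hand side
  have hGeq : ∀ p, (fun t' => fderiv ℝ Lc
      (q 0 t', fun i => deriv (fun t'' => q 0 t'' i) t') (0, (Pi.single p 1 : Fin n → ℝ)))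
      = G p := by
    intro p
    funext t'
    have hc2 : ((q 0 t', fun i => deriv (fun t'' => q 0 t'' i) t') :
        (Fin n → ℝ) × (Fin n → ℝ)) = c t' := by
      apply Prod.ext
      · rfl
      · exact funext fun i => deriv_qt hq 0 t' i
    rw [hc2]
  have hRHS : ∫ t in a..b, ∑ p : Fin n,
      (fderiv ℝ Lc (q 0 t, fun i => deriv (fun t' => q 0 t' i) t)
          ((Pi.single p 1 : Fin n → ℝ), 0)
        - deriv (fun t' => fderiv ℝ Lc (q 0 t', fun i => deriv (fun t'' => q 0 t'' i) t')
            (0, (Pi.single p 1 : Fin n → ℝ))) t)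
      * deriv (fun s' => q s' t p) 0
      = (∑ p, ∫ t in a..b, dl p t * P p t) - ∑ p, ∫ t in a..b, dl p t * deriv (G p) t := by
    have hptwise : ∀ t, t ∈ Set.uIcc a b → (∑ p : Fin n,
        (fderiv ℝ Lc (q 0 t, fun i => deriv (fun t' => q 0 t' i) t)
            ((Pi.single p 1 : Fin n → ℝ), 0)
          - deriv (fun t' => fderiv ℝ Lc (q 0 t', fun i => deriv (fun t'' => q 0 t'' i) t')
              (0, (Pi.single p 1 : Fin n → ℝ))) t)
        * deriv (fun s' => q s' t p) 0)
        = ∑ p, (dl p t * P p t - dl p t * deriv (G p) t) := by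
      intro t _
      apply Finset.sum_congr rfl
      intro p _
      have h1 : deriv (fun s' => q s' t p) 0 = dl p t := deriv_qs hq 0 t p
      have h2 : fderiv ℝ Lc (q 0 t, fun i => deriv (fun t' => q 0 t' i) t)
          ((Pi.single p 1 : Fin n → ℝ), 0) = P p t := by
        have hc2 : ((q 0 t, fun i => deriv (fun t' => q 0 t' i) t) :
            (Fin n → ℝ) × (Fin n → ℝ)) = c t := by
          apply Prod.ext
          · rfl
          · exact funext fun i => deriv_qt hq 0 t i
        rw [hc2]
      rw [h1, h2, hGeq p]
      ring
    rw [intervalIntegral.integral_congr hptwise,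
      intervalIntegral.integral_finset_sum (f := fun p t => dl p t * P p t - dl p t * deriv (G p) t) (fun p _ =>
        (((hdlc p).mul (hPc p)).sub ((hdlc p).mul (hG'c p))).intervalIntegrable a b)]
    rw [← Finset.sum_sub_distrib]
    apply Finset.sum_congr rfl
    intro p _
    exact intervalIntegral.integral_sub (hPint p)
      (((hdlc p).mul (hG'c p)).intervalIntegrable a b)
  rw [hRHS, hsplit]
  have : ∀ m ∈ (Finset.univ : Finset (Fin n)), ∫ t in a..b, W t m * G m t
      = - ∫ t in a..b, dl m t * deriv (G m) t := fun m _ => hibp m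
  rw [Finset.sum_congr rfl this, Finset.sum_neg_distrib]
  ring

end step12

section keyalg
variable {n : ℕ}

lemma collapse (f : Fin n → ℝ) (j0 : Fin n) :
    ∑ j, f j * (if j = j0 then (1:ℝ) else 0) = f j0 := by
  simp [mul_ite, Finset.sum_ite_eq']

lemma key_algebra (Ψm Φm : Matrix (Fin n) (Fin n) ℝ)
    (pΦ : Fin n → Matrix (Fin n) (Fin n) ℝ)
    (ham : Fin n → Fin n → Fin n → ℝ)
    (P Gp G u v : Fin n → ℝ)
    (R2 : ∀ i k, ∑ j, Φm i j * Ψm j k = if i = k then 1 else 0)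
    (R3 : ∀ m k i, ∑ j, Φm m j * ham j k i
        = -∑ r, pΦ r m k * Φm r i + ∑ r, pΦ r m i * Φm r k)
    (R4 : ∀ r, v r = ∑ k, Φm r k * u k)
    (p : Fin n) :
    ∑ i, ((∑ j, (P j + ∑ m, (∑ l, pΦ j m l * u l) * G m) * Φm j i)
        - (∑ m, ((∑ r, v r * pΦ r m i) * G m + Φm m i * Gp m))
        + (∑ j, ∑ k, (∑ m, Φm m j * G m) * ham j k i * u k)) * Ψm i p
      = P p - Gp p := by
  set X : Fin n → ℝ := fun j => P j + ∑ m, (∑ l, pΦ j m l * u l) * G m with hX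
  set E : Fin n → ℝ := fun m => ∑ i, ∑ r, Ψm i p * v r * pΦ r m i with hE
  have hT1 : ∑ i, (∑ j, X j * Φm j i) * Ψm i p = X p := by
    calc ∑ i, (∑ j, X j * Φm j i) * Ψm i p
        = ∑ i, ∑ j, X j * Φm j i * Ψm i p := by
          simp [Finset.sum_mul]
      _ = ∑ j, ∑ i, X j * Φm j i * Ψm i p := Finset.sum_comm
      _ = ∑ j, X j * ∑ i, Φm j i * Ψm i p := by
          simp [Finset.mul_sum, mul_assoc]
      _ = ∑ j, X j * (if j = p then 1 else 0) := by
          exact Finset.sum_congr rfl fun j _ => by rw [R2]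
      _ = X p := collapse X p
  have hT2 : ∑ i, (∑ m, ((∑ r, v r * pΦ r m i) * G m + Φm m i * Gp m)) * Ψm i p
      = (∑ m, E m * G m) + Gp p := by
    calc ∑ i, (∑ m, ((∑ r, v r * pΦ r m i) * G m + Φm m i * Gp m)) * Ψm i p
        = ∑ i, ∑ m, (((∑ r, v r * pΦ r m i) * G m) * Ψm i p + (Φm m i * Gp m) * Ψm i p) := by
          simp [Finset.sum_mul, add_mul]
      _ = ∑ m, ∑ i, (((∑ r, v r * pΦ r m i) * G m) * Ψm i p + (Φm m i * Gp m) * Ψm i p) :=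
          Finset.sum_comm
      _ = ∑ m, ((∑ i, ∑ r, Ψm i p * v r * pΦ r m i) * G m + (∑ i, Φm m i * Ψm i p) * Gp m) := by
          apply Finset.sum_congr rfl
          intro m _
          rw [Finset.sum_add_distrib]
          congr 1
          · rw [Finset.sum_mul]
            apply Finset.sum_congr rfl
            intro i _
            rw [Finset.sum_mul, Finset.sum_mul, Finset.sum_mul]
            apply Finset.sum_congr rfl
            intro r _
            ring
          · rw [Finset.sum_mul]
            apply Finset.sum_congr rfl
            intro i _
            ring
      _ = (∑ m, E m * G m) + Gp p := by
          rw [Finset.sum_add_distrib]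
          congr 1
          have : ∀ m, (∑ i, Φm m i * Ψm i p) * Gp m = (if m = p then 1 else 0) * Gp m :=
            fun m => by rw [R2]
          rw [Finset.sum_congr rfl fun m _ => this m]
          simp [ite_mul, Finset.sum_ite_eq']
  have hT3 : ∑ i, (∑ j, ∑ k, (∑ m, Φm m j * G m) * ham j k i * u k) * Ψm i p
      = ∑ m, (-(∑ l, pΦ p m l * u l) + E m) * G m := by
    have hB : ∑ i, (∑ j, ∑ k, (∑ m, Φm m j * G m) * ham j k i * u k) * Ψm i p
        = ∑ m, ∑ k, ∑ i, ∑ j, Φm m j * ham j k i * (G m * u k * Ψm i p) := by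
      calc ∑ i, (∑ j, ∑ k, (∑ m, Φm m j * G m) * ham j k i * u k) * Ψm i p
          = ∑ i, ∑ j, ∑ k, ∑ m, Φm m j * ham j k i * (G m * u k * Ψm i p) := by
            apply Finset.sum_congr rfl
            intro i _
            rw [Finset.sum_mul]
            apply Finset.sum_congr rfl
            intro j _
            rw [Finset.sum_mul]
            apply Finset.sum_congr rfl
            intro k _
            rw [Finset.sum_mul, Finset.sum_mul, Finset.sum_mul]
            apply Finset.sum_congr rfl
            intro m _
            ring
        _ = ∑ i, ∑ j, ∑ m, ∑ k, Φm m j * ham j k i * (G m * u k * Ψm i p) :=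
            Finset.sum_congr rfl fun i _ => Finset.sum_congr rfl fun j _ => Finset.sum_comm
        _ = ∑ i, ∑ m, ∑ j, ∑ k, Φm m j * ham j k i * (G m * u k * Ψm i p) :=
            Finset.sum_congr rfl fun i _ => Finset.sum_comm
        _ = ∑ m, ∑ i, ∑ j, ∑ k, Φm m j * ham j k i * (G m * u k * Ψm i p) := Finset.sum_comm
        _ = ∑ m, ∑ i, ∑ k, ∑ j, Φm m j * ham j k i * (G m * u k * Ψm i p) :=
            Finset.sum_congr rfl fun m _ => Finset.sum_congr rfl fun i _ => Finset.sum_comm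
        _ = ∑ m, ∑ k, ∑ i, ∑ j, Φm m j * ham j k i * (G m * u k * Ψm i p) :=
            Finset.sum_congr rfl fun m _ => Finset.sum_comm
    rw [hB]
    apply Finset.sum_congr rfl
    intro m _
    have h1 : ∀ k, ∑ i, (∑ r, pΦ r m k * Φm r i) * (G m * u k * Ψm i p)
        = pΦ p m k * (G m * u k) := by
      intro k
      calc ∑ i, (∑ r, pΦ r m k * Φm r i) * (G m * u k * Ψm i p)
          = ∑ i, ∑ r, (pΦ r m k * (G m * u k)) * (Φm r i * Ψm i p) := by
            apply Finset.sum_congr rfl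
            intro i _
            rw [Finset.sum_mul]
            apply Finset.sum_congr rfl
            intro r _
            ring
        _ = ∑ r, ∑ i, (pΦ r m k * (G m * u k)) * (Φm r i * Ψm i p) := Finset.sum_comm
        _ = ∑ r, (pΦ r m k * (G m * u k)) * ∑ i, Φm r i * Ψm i p := by
            apply Finset.sum_congr rfl
            intro r _
            rw [Finset.mul_sum]
        _ = ∑ r, (pΦ r m k * (G m * u k)) * (if r = p then 1 else 0) := by
            apply Finset.sum_congr rfl
            intro r _
            rw [R2]
        _ = pΦ p m k * (G m * u k) := collapse (fun r => pΦ r m k * (G m * u k)) p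
    have h2 : ∑ k, ∑ i, (∑ r, pΦ r m i * Φm r k) * (G m * u k * Ψm i p) = E m * G m := by
      calc ∑ k, ∑ i, (∑ r, pΦ r m i * Φm r k) * (G m * u k * Ψm i p)
          = ∑ i, ∑ k, (∑ r, pΦ r m i * Φm r k) * (G m * u k * Ψm i p) := Finset.sum_comm
        _ = ∑ i, ∑ r, (pΦ r m i * Ψm i p * G m) * v r := by
            apply Finset.sum_congr rfl
            intro i _
            calc ∑ k, (∑ r, pΦ r m i * Φm r k) * (G m * u k * Ψm i p)
                = ∑ k, ∑ r, (pΦ r m i * Ψm i p * G m) * (Φm r k * u k) := by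
                  apply Finset.sum_congr rfl
                  intro k _
                  rw [Finset.sum_mul]
                  apply Finset.sum_congr rfl
                  intro r _
                  ring
              _ = ∑ r, ∑ k, (pΦ r m i * Ψm i p * G m) * (Φm r k * u k) := Finset.sum_comm
              _ = ∑ r, (pΦ r m i * Ψm i p * G m) * ∑ k, Φm r k * u k := by
                  apply Finset.sum_congr rfl
                  intro r _
                  rw [Finset.mul_sum]
              _ = ∑ r, (pΦ r m i * Ψm i p * G m) * v r := by
                  apply Finset.sum_congr rfl
                  intro r _
                  rw [R4]
        _ = E m * G m := by
            rw [hE]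
            simp only [Finset.sum_mul]
            apply Finset.sum_congr rfl
            intro i _
            apply Finset.sum_congr rfl
            intro r _
            ring
    calc ∑ k, ∑ i, ∑ j, Φm m j * ham j k i * (G m * u k * Ψm i p)
        = ∑ k, ∑ i, (-∑ r, pΦ r m k * Φm r i + ∑ r, pΦ r m i * Φm r k)
            * (G m * u k * Ψm i p) := by
          apply Finset.sum_congr rfl
          intro k _
          apply Finset.sum_congr rfl
          intro i _
          rw [← Finset.sum_mul, R3]
      _ = (∑ k, ∑ i, -((∑ r, pΦ r m k * Φm r i) * (G m * u k * Ψm i p)))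
            + ∑ k, ∑ i, (∑ r, pΦ r m i * Φm r k) * (G m * u k * Ψm i p) := by
          rw [← Finset.sum_add_distrib]
          apply Finset.sum_congr rfl
          intro k _
          rw [← Finset.sum_add_distrib]
          apply Finset.sum_congr rfl
          intro i _
          ring
      _ = -(∑ l, pΦ p m l * u l) * G m + E m * G m := by
          rw [h2]
          congr 1
          have : ∀ k, ∑ i, -((∑ r, pΦ r m k * Φm r i) * (G m * u k * Ψm i p))
              = -(pΦ p m k * (G m * u k)) := by
            intro k
            rw [← h1 k, ← Finset.sum_neg_distrib]
          rw [Finset.sum_congr rfl fun k _ => this k, neg_mul, Finset.sum_mul,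
            ← Finset.sum_neg_distrib]
          apply Finset.sum_congr rfl
          intro k _
          ring
      _ = (-(∑ l, pΦ p m l * u l) + E m) * G m := by ring
  calc ∑ i, ((∑ j, X j * Φm j i)
        - (∑ m, ((∑ r, v r * pΦ r m i) * G m + Φm m i * Gp m))
        + (∑ j, ∑ k, (∑ m, Φm m j * G m) * ham j k i * u k)) * Ψm i p
      = ∑ i, ((∑ j, X j * Φm j i) * Ψm i p
        - (∑ m, ((∑ r, v r * pΦ r m i) * G m + Φm m i * Gp m)) * Ψm i p
        + (∑ j, ∑ k, (∑ m, Φm m j * G m) * ham j k i * u k) * Ψm i p) := by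
        apply Finset.sum_congr rfl
        intro i _
        ring
    _ = X p - ((∑ m, E m * G m) + Gp p) + ∑ m, (-(∑ l, pΦ p m l * u l) + E m) * G m := by
        rw [Finset.sum_add_distrib, Finset.sum_sub_distrib, hT1, hT2, hT3]
    _ = P p - Gp p + ((∑ m, (∑ l, pΦ p m l * u l) * G m) - (∑ m, E m * G m)
          + ∑ m, (-(∑ l, pΦ p m l * u l) + E m) * G m) := by
        rw [hX]
        ring
    _ = P p - Gp p := by
        have : (∑ m, (∑ l, pΦ p m l * u l) * G m) - (∑ m, E m * G m)
            + ∑ m, (-(∑ l, pΦ p m l * u l) + E m) * G m = 0 := by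
          rw [← Finset.sum_sub_distrib, ← Finset.sum_add_distrib]
          apply Finset.sum_eq_zero
          intro m _
          ring
        rw [this, add_zero]
end keyalg


section chainrules
variable {n : ℕ}

lemma pder_scriptL_u
    (Ψ Φ : (Fin n → ℝ) → Matrix (Fin n) (Fin n) ℝ)
    (hΦ : ∀ x, Ψ x * Φ x = 1 ∧ Φ x * Ψ x = 1)
    (L : (Fin n → ℝ) → (Fin n → ℝ) → ℝ)
    (hL : ContDiff ℝ 2 (fun p : (Fin n → ℝ) × (Fin n → ℝ) => L p.1 p.2))
    (x u : Fin n → ℝ) (i : Fin n) :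
    pder (scriptL L Φ x) u i
      = ∑ m, Φ x m i * fderiv ℝ (fun p : (Fin n → ℝ) × (Fin n → ℝ) => L p.1 p.2)
          (x, Φ x *ᵥ u) (0, Pi.single m 1) := by
  set Lc : (Fin n → ℝ) × (Fin n → ℝ) → ℝ := fun p => L p.1 p.2 with hLc
  set M : (Fin n → ℝ) →L[ℝ] (Fin n → ℝ) :=
    LinearMap.toContinuousLinearMap (Matrix.mulVecLin (Φ x)) with hM
  have hMder : HasFDerivAt (fun u' : Fin n → ℝ => Φ x *ᵥ u') M u := M.hasFDerivAt
  have hpair : HasFDerivAt (fun u' : Fin n → ℝ => ((x, Φ x *ᵥ u') :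
      (Fin n → ℝ) × (Fin n → ℝ)))
      ((0 : (Fin n → ℝ) →L[ℝ] (Fin n → ℝ)).prod M) u :=
    (hasFDerivAt_const x u).prodMk hMder
  have hcomp := ((hL.differentiable two_ne_zero) (x, Φ x *ᵥ u)).hasFDerivAt.comp u hpair
  have hfd : fderiv ℝ (scriptL L Φ x) u
      = (fderiv ℝ Lc (x, Φ x *ᵥ u)).comp
          ((0 : (Fin n → ℝ) →L[ℝ] (Fin n → ℝ)).prod M) := hcomp.fderiv
  rw [pder, hfd]
  have happ : ((fderiv ℝ Lc (x, Φ x *ᵥ u)).comp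
      ((0 : (Fin n → ℝ) →L[ℝ] (Fin n → ℝ)).prod M)) (Pi.single i 1)
      = fderiv ℝ Lc (x, Φ x *ᵥ u) (0, Φ x *ᵥ Pi.single i 1) := by
    have hMv : M (Pi.single i 1) = Φ x *ᵥ Pi.single i 1 := rfl
    simp only [ContinuousLinearMap.comp_apply, ContinuousLinearMap.prod_apply,
      ContinuousLinearMap.zero_apply, hMv]
  rw [happ, clm_expand]
  simp only [Pi.zero_apply, zero_mul, Finset.sum_const_zero, zero_add]
  apply Finset.sum_congr rfl
  intro m _
  rw [Matrix.mulVec_single_one, Matrix.col_apply]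

lemma pder_scriptL_x
    (Ψ Φ : (Fin n → ℝ) → Matrix (Fin n) (Fin n) ℝ)
    (hΨ : ∀ i j : Fin n, ContDiff ℝ (⊤ : ℕ∞) (fun x => Ψ x i j))
    (hΦ : ∀ x, Ψ x * Φ x = 1 ∧ Φ x * Ψ x = 1)
    (L : (Fin n → ℝ) → (Fin n → ℝ) → ℝ)
    (hL : ContDiff ℝ 2 (fun p : (Fin n → ℝ) × (Fin n → ℝ) => L p.1 p.2))
    (x u : Fin n → ℝ) (j : Fin n) :
    pder (fun y => scriptL L Φ y u) x j
      = fderiv ℝ (fun p : (Fin n → ℝ) × (Fin n → ℝ) => L p.1 p.2)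
          (x, Φ x *ᵥ u) (Pi.single j 1, 0)
        + ∑ m, (∑ l, pder (fun y => Φ y m l) x j * u l)
            * fderiv ℝ (fun p : (Fin n → ℝ) × (Fin n → ℝ) => L p.1 p.2)
                (x, Φ x *ᵥ u) (0, Pi.single m 1) := by
  set Lc : (Fin n → ℝ) × (Fin n → ℝ) → ℝ := fun p => L p.1 p.2 with hLc
  have hΦs := contDiff_Phi Ψ Φ hΨ hΦ
  set D : (Fin n → ℝ) →L[ℝ] (Fin n → ℝ) :=
    ContinuousLinearMap.pi (fun m => ∑ l, u l • fderiv ℝ (fun y => Φ y m l) x) with hD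
  have hcoord : ∀ m : Fin n, HasFDerivAt (fun y => ∑ l, Φ y m l * u l)
      (∑ l, u l • fderiv ℝ (fun y => Φ y m l) x) x := by
    intro m
    apply HasFDerivAt.fun_sum
    intro l _
    exact (((hΦs m l).differentiable (by simp) x).hasFDerivAt).mul_const (u l)
  have hΦv : HasFDerivAt (fun y => Φ y *ᵥ u) D x := by
    apply hasFDerivAt_pi''
    intro m
    rw [hD, ContinuousLinearMap.proj_pi]
    exact hcoord m
  have hpair : HasFDerivAt (fun y => ((y, Φ y *ᵥ u) : (Fin n → ℝ) × (Fin n → ℝ)))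
      ((ContinuousLinearMap.id ℝ (Fin n → ℝ)).prod D) x :=
    (hasFDerivAt_id x).prodMk hΦv
  have hcomp := ((hL.differentiable two_ne_zero) (x, Φ x *ᵥ u)).hasFDerivAt.comp x hpair
  have hfd : fderiv ℝ (fun y => scriptL L Φ y u) x
      = (fderiv ℝ Lc (x, Φ x *ᵥ u)).comp
          ((ContinuousLinearMap.id ℝ (Fin n → ℝ)).prod D) := hcomp.fderiv
  rw [pder, hfd]
  have happ : ((fderiv ℝ Lc (x, Φ x *ᵥ u)).comp
      ((ContinuousLinearMap.id ℝ (Fin n → ℝ)).prod D)) (Pi.single j 1)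
      = fderiv ℝ Lc (x, Φ x *ᵥ u) (Pi.single j 1, D (Pi.single j 1)) := by
    simp [ContinuousLinearMap.prod_apply]
  rw [happ, clm_expand]
  congr 1
  · show ∑ p, (Pi.single j 1 : Fin n → ℝ) p
        * fderiv ℝ Lc (x, Φ x *ᵥ u) (Pi.single p 1, 0)
      = fderiv ℝ Lc (x, Φ x *ᵥ u) (Pi.single j 1, 0)
    have : ∀ p : Fin n, (Pi.single j 1 : Fin n → ℝ) p
        * fderiv ℝ Lc (x, Φ x *ᵥ u) (Pi.single p 1, 0)
        = (if p = j then fderiv ℝ Lc (x, Φ x *ᵥ u) (Pi.single p 1, 0) else 0) := by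
      intro p
      rcases eq_or_ne p j with h | h
      · subst h; simp
      · simp [Pi.single_apply, Ne.symm h, h]
    rw [Finset.sum_congr rfl fun p _ => this p, Finset.sum_ite_eq']
    simp
  · apply Finset.sum_congr rfl
    intro m _
    show D (Pi.single j 1) m * fderiv ℝ Lc (x, Φ x *ᵥ u) (0, Pi.single m 1)
      = (∑ l, pder (fun y => Φ y m l) x j * u l)
        * fderiv ℝ Lc (x, Φ x *ᵥ u) (0, Pi.single m 1)
    have hDval : D (Pi.single j 1) m = ∑ l, pder (fun y => Φ y m l) x j * u l := by
      rw [hD]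
      simp only [ContinuousLinearMap.pi_apply, ContinuousLinearMap.sum_apply,
        ContinuousLinearMap.smul_apply, smul_eq_mul]
      apply Finset.sum_congr rfl
      intro l _
      rw [pder]
      ring
    rw [hDval]

lemma rearrange1 {n : ℕ} (a : Fin n → ℝ) (b : Fin n → Fin n → ℝ) (c : Fin n → ℝ) (d : ℝ) :
    ∑ α, (∑ j, a j * b j α) * c α * d = (∑ j, a j * (∑ α, b j α * c α)) * d := by
  calc ∑ α, (∑ j, a j * b j α) * c α * d
      = ∑ α, ∑ j, a j * b j α * c α * d := by
        apply Finset.sum_congr rfl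
        intro α _
        rw [Finset.sum_mul, Finset.sum_mul]
    _ = ∑ j, ∑ α, a j * b j α * c α * d := Finset.sum_comm
    _ = ∑ j, a j * (∑ α, b j α * c α) * d := by
        apply Finset.sum_congr rfl
        intro j _
        rw [Finset.mul_sum, Finset.sum_mul]
        apply Finset.sum_congr rfl
        intro α _
        ring
    _ = (∑ j, a j * (∑ α, b j α * c α)) * d := by rw [Finset.sum_mul]

lemma rearrange2 {n : ℕ} (a : Fin n → ℝ) (b : Fin n → Fin n → ℝ) (c : Fin n → ℝ) (K : ℝ) :
    ∑ β, (∑ j, a j * b j β) * K * c β = (∑ j, a j * (∑ β, b j β * c β)) * K := by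
  calc ∑ β, (∑ j, a j * b j β) * K * c β
      = ∑ β, (∑ j, a j * b j β) * c β * K := by
        apply Finset.sum_congr rfl
        intro β _
        ring
    _ = (∑ j, a j * (∑ β, b j β * c β)) * K := rearrange1 a b c K

lemma hamel_contract
    (Ψ Φ : (Fin n → ℝ) → Matrix (Fin n) (Fin n) ℝ)
    (hΨ : ∀ i j : Fin n, ContDiff ℝ (⊤ : ℕ∞) (fun x => Ψ x i j))
    (hΦ : ∀ x, Ψ x * Φ x = 1 ∧ Φ x * Ψ x = 1)
    (x : Fin n → ℝ) (m k i : Fin n) :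
    ∑ j, Φ x m j * hamel Ψ Φ x j k i
      = -∑ r, pder (fun y => Φ y m k) x r * Φ x r i
        + ∑ r, pder (fun y => Φ y m i) x r * Φ x r k := by
  have hB : ∀ α β, ∑ j, Φ x m j * pder (fun y => Ψ y j α) x β
      = -∑ j, pder (fun y => Φ y m j) x β * Ψ x j α := by
    intro α β
    have := pder_PhiPsi hΨ hΦ x m α β
    have h2 : ∑ j, pder (fun y => Φ y m j) x β * Ψ x j α
        + ∑ j, Φ x m j * pder (fun y => Ψ y j α) x β = 0 := by
      rw [← Finset.sum_add_distrib]; exact this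
    linarith
  have hcol : ∀ β, ∑ j, pder (fun y => Φ y m j) x β * (∑ α, Ψ x j α * Φ x α k)
      = pder (fun y => Φ y m k) x β := by
    intro β
    have : ∀ j, (∑ α, Ψ x j α * Φ x α k) = if j = k then (1:ℝ) else 0 :=
      fun j => mulPsiPhi hΦ x j k
    rw [Finset.sum_congr rfl fun j _ => by rw [this j]]
    exact collapse (fun j => pder (fun y => Φ y m j) x β) k
  have hcol2 : ∀ α, ∑ j, pder (fun y => Φ y m j) x α * (∑ β, Ψ x j β * Φ x β i)
      = pder (fun y => Φ y m i) x α := by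
    intro α
    have : ∀ j, (∑ β, Ψ x j β * Φ x β i) = if j = i then (1:ℝ) else 0 :=
      fun j => mulPsiPhi hΦ x j i
    rw [Finset.sum_congr rfl fun j _ => by rw [this j]]
    exact collapse (fun j => pder (fun y => Φ y m j) x α) i
  calc ∑ j, Φ x m j * hamel Ψ Φ x j k i
      = ∑ j, ∑ α, ∑ β, Φ x m j * ((pder (fun y => Ψ y j α) x β
          - pder (fun y => Ψ y j β) x α) * Φ x α k * Φ x β i) := by
        apply Finset.sum_congr rfl
        intro j _
        rw [hamel, Finset.mul_sum]
        apply Finset.sum_congr rfl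
        intro α _
        rw [Finset.mul_sum]
    _ = ∑ α, ∑ β, (∑ j, Φ x m j * pder (fun y => Ψ y j α) x β
          - ∑ j, Φ x m j * pder (fun y => Ψ y j β) x α) * Φ x α k * Φ x β i := by
        rw [Finset.sum_comm]
        apply Finset.sum_congr rfl
        intro α _
        rw [Finset.sum_comm]
        apply Finset.sum_congr rfl
        intro β _
        simp only [sub_mul, Finset.sum_mul, ← Finset.sum_sub_distrib]
        apply Finset.sum_congr rfl
        intro j _
        ring
    _ = ∑ α, ∑ β, ((-∑ j, pder (fun y => Φ y m j) x β * Ψ x j α)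
          - (-∑ j, pder (fun y => Φ y m j) x α * Ψ x j β)) * Φ x α k * Φ x β i := by
        apply Finset.sum_congr rfl
        intro α _
        apply Finset.sum_congr rfl
        intro β _
        rw [hB α β, hB β α]
    _ = (∑ α, ∑ β, -((∑ j, pder (fun y => Φ y m j) x β * Ψ x j α) * Φ x α k * Φ x β i))
        + ∑ α, ∑ β, (∑ j, pder (fun y => Φ y m j) x α * Ψ x j β) * Φ x α k * Φ x β i := by
        rw [← Finset.sum_add_distrib]
        apply Finset.sum_congr rfl
        intro α _
        rw [← Finset.sum_add_distrib]
        apply Finset.sum_congr rfl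
        intro β _
        ring
    _ = -∑ β, (∑ j, pder (fun y => Φ y m j) x β * (∑ α, Ψ x j α * Φ x α k)) * Φ x β i
        + ∑ α, (∑ j, pder (fun y => Φ y m j) x α * (∑ β, Ψ x j β * Φ x β i)) * Φ x α k := by
        congr 1
        · rw [Finset.sum_comm, ← Finset.sum_neg_distrib]
          apply Finset.sum_congr rfl
          intro β _
          rw [Finset.sum_neg_distrib]
          apply congrArg Neg.neg
          exact rearrange1 (fun j => pder (fun y => Φ y m j) x β)
            (fun j α => Ψ x j α) (fun α => Φ x α k) (Φ x β i)
        · apply Finset.sum_congr rfl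
          intro α _
          exact rearrange2 (fun j => pder (fun y => Φ y m j) x α)
            (fun j β => Ψ x j β) (fun β => Φ x β i) (Φ x α k)
    _ = -∑ β, pder (fun y => Φ y m k) x β * Φ x β i
        + ∑ α, pder (fun y => Φ y m i) x α * Φ x α k := by
        congr 1
        · apply congrArg Neg.neg
          apply Finset.sum_congr rfl
          intro β _
          rw [hcol β]
        · apply Finset.sum_congr rfl
          intro α _
          rw [hcol2 α]

end chainrules

section step3
variable {n : ℕ}

lemma swap_factor {n : ℕ} (A : Fin n → ℝ) (Ψr : Fin n → Fin n → ℝ) (δ : Fin n → ℝ) :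
    ∑ i, A i * (∑ p, Ψr i p * δ p) = ∑ p, (∑ i, A i * Ψr i p) * δ p := by
  calc ∑ i, A i * (∑ p, Ψr i p * δ p)
      = ∑ i, ∑ p, A i * Ψr i p * δ p := by
        apply Finset.sum_congr rfl
        intro i _
        rw [Finset.mul_sum]
        apply Finset.sum_congr rfl
        intro p _
        ring
    _ = ∑ p, ∑ i, A i * Ψr i p * δ p := Finset.sum_comm
    _ = ∑ p, (∑ i, A i * Ψr i p) * δ p := by
        apply Finset.sum_congr rfl
        intro p _
        rw [Finset.sum_mul]

lemma step3
    (Ψ Φ : (Fin n → ℝ) → Matrix (Fin n) (Fin n) ℝ)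
    (hΨ : ∀ i j : Fin n, ContDiff ℝ (⊤ : ℕ∞) (fun x => Ψ x i j))
    (hΦ : ∀ x, Ψ x * Φ x = 1 ∧ Φ x * Ψ x = 1)
    (L : (Fin n → ℝ) → (Fin n → ℝ) → ℝ)
    (hL : ContDiff ℝ 2 (fun p : (Fin n → ℝ) × (Fin n → ℝ) => L p.1 p.2))
    (q : ℝ → ℝ → Fin n → ℝ)
    (hq : ContDiff ℝ 2 (fun p : ℝ × ℝ => q p.1 p.2))
    (t : ℝ) :
    ∑ i, ((∑ j, pder (fun y => scriptL L Φ y (qvel Ψ q 0 t)) (q 0 t) j * Φ (q 0 t) j i)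
        - deriv (fun t' => pder (scriptL L Φ (q 0 t')) (qvel Ψ q 0 t') i) t
        + ∑ j, ∑ k, pder (scriptL L Φ (q 0 t)) (qvel Ψ q 0 t) j
            * hamel Ψ Φ (q 0 t) j k i * qvel Ψ q 0 t k)
      * qvar Ψ q 0 t i
    = ∑ p : Fin n,
        (fderiv ℝ (fun pp : (Fin n → ℝ) × (Fin n → ℝ) => L pp.1 pp.2)
            (q 0 t, fun i => deriv (fun t' => q 0 t' i) t) ((Pi.single p 1 : Fin n → ℝ), 0)
          - deriv (fun t' => fderiv ℝ (fun pp : (Fin n → ℝ) × (Fin n → ℝ) => L pp.1 pp.2)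
              (q 0 t', fun i => deriv (fun t'' => q 0 t'' i) t')
              (0, (Pi.single p 1 : Fin n → ℝ))) t)
        * deriv (fun s' => q s' t p) 0 := by
  have hΦs := contDiff_Phi Ψ Φ hΨ hΦ
  set Lc : (Fin n → ℝ) × (Fin n → ℝ) → ℝ := fun pp => L pp.1 pp.2 with hLcdef
  set Qf : ℝ × ℝ → (Fin n → ℝ) := fun p => q p.1 p.2 with hQfdef
  -- basic identifications
  have h_uvel : ∀ t', qvel Ψ q 0 t'
      = Ψ (q 0 t') *ᵥ (fun i => deriv (fun t'' => q 0 t'' i) t') := fun t' => rfl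
  have h_v : ∀ t', Φ (q 0 t') *ᵥ qvel Ψ q 0 t'
      = (fun i => deriv (fun t'' => q 0 t'' i) t') := by
    intro t'
    rw [h_uvel t', Matrix.mulVec_mulVec, (hΦ (q 0 t')).2, Matrix.one_mulVec]
  -- the Gf functions
  set Gf : Fin n → ℝ → ℝ := fun m t' => fderiv ℝ Lc
      (q 0 t', fun i => deriv (fun t'' => q 0 t'' i) t') (0, (Pi.single m 1 : Fin n → ℝ))
    with hGfdef
  have hGfeq : ∀ m, Gf m = fun t' => fderiv ℝ Lc
      (Qf (0, t'), fderiv ℝ Qf (0, t') (0, 1)) (0, (Pi.single m 1 : Fin n → ℝ)) := by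
    intro m
    funext t'
    show (fderiv ℝ Lc (q 0 t', fun i => deriv (fun t'' => q 0 t'' i) t'))
        (0, (Pi.single m 1 : Fin n → ℝ))
      = (fderiv ℝ Lc (Qf (0, t'), fderiv ℝ Qf (0, t') (0, 1)))
        (0, (Pi.single m 1 : Fin n → ℝ))
    have h2 : (fun i => deriv (fun t'' => q 0 t'' i) t') = fderiv ℝ Qf (0, t') (0, 1) :=
      funext fun i => deriv_qt hq 0 t' i
    rw [h2]
  have hGfsm : ∀ m, ContDiff ℝ 1 (Gf m) := by
    intro m
    rw [hGfeq m]
    have hins : ContDiff ℝ 1 (fun t' : ℝ => (((0:ℝ), t') : ℝ × ℝ)) :=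
      contDiff_const.prodMk contDiff_id
    have hc1 : ContDiff ℝ 1 (fun t' : ℝ => ((Qf (0, t'), fderiv ℝ Qf (0, t') (0, 1)) :
        (Fin n → ℝ) × (Fin n → ℝ))) :=
      ((hq.of_le one_le_two).comp hins).prodMk ((contDiff_Dv hq (0, 1)).comp hins)
    exact ((hL.fderiv_right (by norm_num)).comp hc1).clm_apply contDiff_const
  -- derivative of the curve
  have hcurve : HasDerivAt (fun t' => q 0 t')
      (fun i => deriv (fun t' => q 0 t' i) t) t := by
    have h := hasDerivAt_slice_t Qf (hq.differentiable two_ne_zero) 0 t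
    have he : fderiv ℝ Qf (0, t) (0, 1) = fun i => deriv (fun t' => q 0 t' i) t :=
      funext fun i => (deriv_qt hq 0 t i).symm
    rwa [he] at h
  have hΦcurve : ∀ m i', HasDerivAt (fun t' => Φ (q 0 t') m i')
      (∑ r, (fun i => deriv (fun t' => q 0 t' i) t) r
        * pder (fun y => Φ y m i') (q 0 t) r) t := by
    intro m i'
    have h := (((hΦs m i').differentiable (by simp) (q 0 t)).hasFDerivAt).comp_hasDerivAt t hcurve
    rwa [vec_expand] at h
  -- rewrite the time-derivative term
  have hfun : ∀ i, (fun t' => pder (scriptL L Φ (q 0 t')) (qvel Ψ q 0 t') i)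
      = fun t' => ∑ m, Φ (q 0 t') m i * Gf m t' := by
    intro i
    funext t'
    rw [pder_scriptL_u Ψ Φ hΦ L hL (q 0 t') (qvel Ψ q 0 t') i, h_v t']
  have hderiv_eq : ∀ i, deriv (fun t' => pder (scriptL L Φ (q 0 t')) (qvel Ψ q 0 t') i) t
      = ∑ m, ((∑ r, (fun i => deriv (fun t' => q 0 t' i) t) r
            * pder (fun y => Φ y m i) (q 0 t) r) * Gf m t
          + Φ (q 0 t) m i * deriv (Gf m) t) := by
    intro i
    rw [hfun i]
    have hprod : HasDerivAt (fun t' => ∑ m, Φ (q 0 t') m i * Gf m t')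
        (∑ m, ((∑ r, (fun i => deriv (fun t' => q 0 t' i) t) r
            * pder (fun y => Φ y m i) (q 0 t) r) * Gf m t
          + Φ (q 0 t) m i * deriv (Gf m) t)) t := by
      apply HasDerivAt.fun_sum
      intro m _
      exact (hΦcurve m i).mul (((hGfsm m).differentiable one_ne_zero t).hasDerivAt)
    exact hprod.deriv
  -- rewrite the space-derivative term
  have hxterm : ∀ j, pder (fun y => scriptL L Φ y (qvel Ψ q 0 t)) (q 0 t) j
      = fderiv ℝ Lc (q 0 t, fun i => deriv (fun t' => q 0 t' i) t)
          ((Pi.single j 1 : Fin n → ℝ), 0)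
        + ∑ m, (∑ l, pder (fun y => Φ y m l) (q 0 t) j * qvel Ψ q 0 t l) * Gf m t := by
    intro j
    rw [pder_scriptL_x Ψ Φ hΨ hΦ L hL (q 0 t) (qvel Ψ q 0 t) j, h_v t]
  have huterm : ∀ j, pder (scriptL L Φ (q 0 t)) (qvel Ψ q 0 t) j
      = ∑ m, Φ (q 0 t) m j * Gf m t := by
    intro j
    rw [pder_scriptL_u Ψ Φ hΦ L hL (q 0 t) (qvel Ψ q 0 t) j, h_v t]
  -- assemble
  calc ∑ i, ((∑ j, pder (fun y => scriptL L Φ y (qvel Ψ q 0 t)) (q 0 t) j * Φ (q 0 t) j i)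
        - deriv (fun t' => pder (scriptL L Φ (q 0 t')) (qvel Ψ q 0 t') i) t
        + ∑ j, ∑ k, pder (scriptL L Φ (q 0 t)) (qvel Ψ q 0 t) j
            * hamel Ψ Φ (q 0 t) j k i * qvel Ψ q 0 t k) * qvar Ψ q 0 t i
      = ∑ i, ((∑ j, (fderiv ℝ Lc (q 0 t, fun i => deriv (fun t' => q 0 t' i) t)
              ((Pi.single j 1 : Fin n → ℝ), 0)
            + ∑ m, (∑ l, pder (fun y => Φ y m l) (q 0 t) j * qvel Ψ q 0 t l) * Gf m t)
              * Φ (q 0 t) j i)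
          - (∑ m, ((∑ r, (fun i => deriv (fun t' => q 0 t' i) t) r
              * pder (fun y => Φ y m i) (q 0 t) r) * Gf m t
            + Φ (q 0 t) m i * deriv (Gf m) t))
          + ∑ j, ∑ k, (∑ m, Φ (q 0 t) m j * Gf m t)
              * hamel Ψ Φ (q 0 t) j k i * qvel Ψ q 0 t k)
        * (∑ p, Ψ (q 0 t) i p * deriv (fun s' => q s' t p) 0) := by
        apply Finset.sum_congr rfl
        intro i _
        congr 1
        · rw [hderiv_eq i]
          congr 1
          · congr 1
            apply Finset.sum_congr rfl
            intro j _
            rw [hxterm j]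
          · apply Finset.sum_congr rfl
            intro j _
            apply Finset.sum_congr rfl
            intro k _
            rw [huterm j]
    _ = ∑ p, (∑ i, ((∑ j, (fderiv ℝ Lc (q 0 t, fun i => deriv (fun t' => q 0 t' i) t)
              ((Pi.single j 1 : Fin n → ℝ), 0)
            + ∑ m, (∑ l, pder (fun y => Φ y m l) (q 0 t) j * qvel Ψ q 0 t l) * Gf m t)
              * Φ (q 0 t) j i)
          - (∑ m, ((∑ r, (fun i => deriv (fun t' => q 0 t' i) t) r
              * pder (fun y => Φ y m i) (q 0 t) r) * Gf m t
            + Φ (q 0 t) m i * deriv (Gf m) t))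
          + ∑ j, ∑ k, (∑ m, Φ (q 0 t) m j * Gf m t)
              * hamel Ψ Φ (q 0 t) j k i * qvel Ψ q 0 t k)
        * Ψ (q 0 t) i p) * deriv (fun s' => q s' t p) 0 := by
        exact swap_factor (fun i => ((∑ j, (fderiv ℝ Lc (q 0 t, fun i => deriv (fun t' => q 0 t' i) t)
              ((Pi.single j 1 : Fin n → ℝ), 0)
            + ∑ m, (∑ l, pder (fun y => Φ y m l) (q 0 t) j * qvel Ψ q 0 t l) * Gf m t)
              * Φ (q 0 t) j i)
          - (∑ m, ((∑ r, (fun i => deriv (fun t' => q 0 t' i) t) r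
              * pder (fun y => Φ y m i) (q 0 t) r) * Gf m t
            + Φ (q 0 t) m i * deriv (Gf m) t))
          + ∑ j, ∑ k, (∑ m, Φ (q 0 t) m j * Gf m t)
              * hamel Ψ Φ (q 0 t) j k i * qvel Ψ q 0 t k))
          (fun i p => Ψ (q 0 t) i p) (fun p => deriv (fun s' => q s' t p) 0)
    _ = ∑ p, (fderiv ℝ Lc (q 0 t, fun i => deriv (fun t' => q 0 t' i) t)
            ((Pi.single p 1 : Fin n → ℝ), 0) - deriv (Gf p) t)
          * deriv (fun s' => q s' t p) 0 := by
        apply Finset.sum_congr rfl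
        intro p _
        congr 1
        exact key_algebra (Ψ (q 0 t)) (Φ (q 0 t))
          (fun r => Matrix.of fun m l => pder (fun y => Φ y m l) (q 0 t) r)
          (hamel Ψ Φ (q 0 t))
          (fun j => fderiv ℝ Lc (q 0 t, fun i => deriv (fun t' => q 0 t' i) t)
            ((Pi.single j 1 : Fin n → ℝ), 0))
          (fun m => deriv (Gf m) t) (fun m => Gf m t) (qvel Ψ q 0 t)
          (fun i => deriv (fun t' => q 0 t' i) t)
          (mulPhiPsi hΦ (q 0 t))
          (fun m k i => hamel_contract Ψ Φ hΨ hΦ (q 0 t) m k i)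
          (fun r => congrFun (h_v t).symm r)
          p
    _ = ∑ p, (fderiv ℝ Lc (q 0 t, fun i => deriv (fun t' => q 0 t' i) t)
            ((Pi.single p 1 : Fin n → ℝ), 0)
          - deriv (fun t' => fderiv ℝ Lc
              (q 0 t', fun i => deriv (fun t'' => q 0 t'' i) t')
              (0, (Pi.single p 1 : Fin n → ℝ))) t)
          * deriv (fun s' => q s' t p) 0 := rfl

end step3

/-- **First variation formula in quasi-velocities.**
For a proper C² variation, `I'(0) = ∫ [∂ℒ/∂q^j Φ^j_i − d/dt(∂ℒ/∂u^i)
+ ∂ℒ/∂u^j γ^j_{ki} u^k] δθ^i dt`, evaluated along the base curve `s = 0`. -/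
theorem first_variation_quasivelocities {n : ℕ}
    (Ψ Φ : (Fin n → ℝ) → Matrix (Fin n) (Fin n) ℝ)
    (hΨ : ∀ i j : Fin n, ContDiff ℝ (⊤ : ℕ∞) (fun x => Ψ x i j))
    (hΦ : ∀ x, Ψ x * Φ x = 1 ∧ Φ x * Ψ x = 1)
    (L : (Fin n → ℝ) → (Fin n → ℝ) → ℝ)
    (hL : ContDiff ℝ 2 (fun p : (Fin n → ℝ) × (Fin n → ℝ) => L p.1 p.2))
    (a b : ℝ) (hab : a < b)
    (q : ℝ → ℝ → Fin n → ℝ)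
    (hq : ContDiff ℝ 2 (fun p : ℝ × ℝ => q p.1 p.2))
    (hproper : ∀ s, q s a = q 0 a ∧ q s b = q 0 b) :
    deriv (fun s => ∫ t in a..b, L (q s t) (fun i => deriv (fun t' => q s t' i) t)) 0
    = ∫ t in a..b, ∑ i,
        ((∑ j, pder (fun y => scriptL L Φ y (qvel Ψ q 0 t)) (q 0 t) j * Φ (q 0 t) j i)
          - deriv (fun t' => pder (scriptL L Φ (q 0 t')) (qvel Ψ q 0 t') i) t
          + ∑ j, ∑ k, pder (scriptL L Φ (q 0 t)) (qvel Ψ q 0 t) j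
              * hamel Ψ Φ (q 0 t) j k i * qvel Ψ q 0 t k)
        * qvar Ψ q 0 t i := by
  rw [step12 L hL a b hab q hq hproper]
  apply intervalIntegral.integral_congr
  intro t _
  exact (step3 Ψ Φ hΨ hΦ L hL q hq t).symm

end
end
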